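/- arXiv:2101.07004 — 4 statements merged into one kernel-verified Lean document; each statement's English description precedes it below -/
import Mathlib

section
/- Let (W, x, y) ∈ C(y₀) for some parameter vector y₀ ∈ ℝ^K. Then for every k ∈ {1,…,K}, the original SINR constraint of the sum-rate problem holds: log(1 + Re(Tr(H_k W_k)) / (Σ_{i≠k} Re(Tr(H_k W_i)) + σ²)) ≥ x_k. In other words, every feasible point of the linearized (inner-approximated) problem P2(y₀) is feasible for the original semidefinite-relaxed sum-rate problem. -/
open scoped ComplexOrder

/-! The linearized constraint (iv) bounds the interference-plus-noise `σ² + I_k` by the tangent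
line of `exp` at `y₀_k`, which lies below `exp`; hence `log (σ² + I_k) ≤ y_k`. Subtracting this
from (i), whose left side is `log (σ² + I_k + S_k)`, leaves
`x_k ≤ log (σ² + I_k + S_k) - log (σ² + I_k) = log (1 + S_k / (I_k + σ²))`. The only matrix
input is `0 ≤ Re Tr (H W)` for positive semidefinite `H`, `W`. -/

namespace Matrix.PosSemidef

variable {𝕜 n : Type*} [RCLike 𝕜] [Fintype n]

theorem trace_mul_nonneg {A B : Matrix n n 𝕜} (hA : A.PosSemidef) (hB : B.PosSemidef) :
    0 ≤ (A * B).trace := by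
  classical
  open scoped MatrixOrder in
  obtain ⟨C, rfl⟩ := CStarAlgebra.nonneg_iff_eq_star_mul_self.mp hA.nonneg
  rw [star_eq_conjTranspose, Matrix.mul_assoc, trace_mul_comm]
  exact (hB.mul_mul_conjTranspose_same C).trace_nonneg

theorem re_trace_mul_nonneg {A B : Matrix n n 𝕜} (hA : A.PosSemidef) (hB : B.PosSemidef) :
    0 ≤ RCLike.re (A * B).trace :=
  (RCLike.nonneg_iff.mp (hA.trace_mul_nonneg hB)).1

end Matrix.PosSemidef

namespace Real

theorem exp_mul_sub_add_one_le_exp (y₀ y : ℝ) : exp y₀ * (y - y₀ + 1) ≤ exp y :=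
  calc exp y₀ * (y - y₀ + 1) ≤ exp y₀ * exp (y - y₀) :=
        mul_le_mul_of_nonneg_left (add_one_le_exp _) (exp_nonneg _)
    _ = exp y := by rw [← exp_add, add_sub_cancel]

theorem log_one_add_div {a b : ℝ} (ha : 0 ≤ a) (hb : 0 < b) :
    log (1 + a / b) = log (b + a) - log b := by
  rw [← log_div (by positivity) hb.ne', add_div, div_self hb.ne']

end Real

theorem feasible_linearized_implies_feasible_original_general
    {K M : ℕ}
    (H : Fin K → Matrix (Fin M) (Fin M) ℂ) (hH : ∀ k, (H k).PosSemidef)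
    (σ2 : ℝ) (hσ2 : 0 < σ2) (y₀ : Fin K → ℝ)
    (W : Fin K → Matrix (Fin M) (Fin M) ℂ) (x y : Fin K → ℝ)
    (hW : ∀ k, (W k).PosSemidef)
    (h1 : ∀ k, x k + y k ≤ Real.log (σ2 + ∑ i, ((H k * W i).trace).re))
    (h4 : ∀ k, σ2 + ∑ i ∈ Finset.univ.erase k, ((H k * W i).trace).re
            ≤ Real.exp (y₀ k) * (y k - y₀ k + 1)) :
    ∀ k, x k ≤ Real.log (1 + ((H k * W k).trace).re /
        (∑ i ∈ Finset.univ.erase k, ((H k * W i).trace).re + σ2)) := by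
  intro k
  set S := ((H k * W k).trace).re
  set I := ∑ i ∈ Finset.univ.erase k, ((H k * W i).trace).re
  have hS : 0 ≤ S := (hH k).re_trace_mul_nonneg (hW k)
  have hI : 0 < I + σ2 :=
    add_pos_of_nonneg_of_pos (Finset.sum_nonneg fun i _ ↦ (hH k).re_trace_mul_nonneg (hW i)) hσ2
  have hsplit : ∑ i, ((H k * W i).trace).re = S + I :=
    (Finset.add_sum_erase _ _ (Finset.mem_univ k)).symm
  have hy : Real.log (I + σ2) ≤ y k := by
    rw [Real.log_le_iff_le_exp hI, add_comm]
    exact (h4 k).trans (Real.exp_mul_sub_add_one_le_exp _ _)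
  calc x k ≤ Real.log (σ2 + (S + I)) - Real.log (I + σ2) := by linarith [hsplit ▸ h1 k]
    _ = Real.log (1 + S / (I + σ2)) := by
      rw [Real.log_one_add_div hS hI]
      ring_nf

/-- Every feasible point of the linearized (inner-approximated) problem `P2(y₀)`
is feasible for the original semidefinite-relaxed sum-rate problem: the SINR
constraint `log(1 + SINR_k) ≥ x_k` holds for every user `k`. -/
theorem feasible_linearized_implies_feasible_original
    {K M : ℕ} (hK : 1 ≤ K) (hM : 1 ≤ M)
    (H : Fin K → Matrix (Fin M) (Fin M) ℂ) (hH : ∀ k, (H k).PosSemidef)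
    (σ2 P : ℝ) (hσ2 : 0 < σ2) (hP : 0 < P) (c : Fin K → ℝ) (y₀ : Fin K → ℝ)
    (W : Fin K → Matrix (Fin M) (Fin M) ℂ) (x y : Fin K → ℝ)
    (hW : ∀ k, (W k).PosSemidef)
    (h1 : ∀ k, x k + y k ≤ Real.log (σ2 + ∑ i, ((H k * W i).trace).re))
    (h2 : ∀ k, c k ≤ x k)
    (h3 : ∑ k, ((W k).trace).re ≤ P)
    (h4 : ∀ k, σ2 + ∑ i ∈ Finset.univ.erase k, ((H k * W i).trace).re
            ≤ Real.exp (y₀ k) * (y k - y₀ k + 1)) :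
    ∀ k, x k ≤ Real.log (1 + ((H k * W k).trace).re /
        (∑ i ∈ Finset.univ.erase k, ((H k * W i).trace).re + σ2)) :=
  feasible_linearized_implies_feasible_original_general H hH σ2 hσ2 y₀ W x y hW h1 h4
end

section
/- (Proposition 1, monotonicity of Algorithm 1.) Let (W, x, y) ∈ C(y₀) for some parameter vector y₀ ∈ ℝ^K. Then (W, x, y) ∈ C(y), i.e., the point remains feasible for the linearized problem whose linearization point is its own slack vector y. Consequently, if the set of objective values V(y) := {Σ_{k=1}^K x'_k : (W', x', y') ∈ C(y)} is bounded above, then Σ_{k=1}^K x_k ≤ sup V(y); in particular, the sequence of optimal objective values generated by iteratively replacing the linearization point y₀ with the optimal slack y is non-decreasing. -/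
open scoped ComplexOrder

/-- The linearized feasible set `C(y₀)` of problem `P2(y₀)`: `(W, x, y)` is feasible iff
the `W k` are Hermitian PSD, `log(σ² + Σ_i Re Tr(H_k W_i)) ≥ x_k + y_k`, `x_k ≥ c_k`,
`Σ_k Re Tr(W_k) ≤ P`, and
`σ² + Σ_{i≠k} Re Tr(H_k W_i) ≤ exp(y₀_k)·(y_k − y₀_k + 1)` for all `k`. -/
def LinFeasible {K M : ℕ} (H : Fin K → Matrix (Fin M) (Fin M) ℂ) (σ2 P : ℝ)
    (c : Fin K → ℝ) (y₀ : Fin K → ℝ)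
    (W : Fin K → Matrix (Fin M) (Fin M) ℂ) (x y : Fin K → ℝ) : Prop :=
  (∀ k, (W k).PosSemidef) ∧
  (∀ k, x k + y k ≤ Real.log (σ2 + ∑ i, ((H k * W i).trace).re)) ∧
  (∀ k, c k ≤ x k) ∧
  (∑ k, ((W k).trace).re ≤ P) ∧
  (∀ k, σ2 + ∑ i ∈ Finset.univ.erase k, ((H k * W i).trace).re
      ≤ Real.exp (y₀ k) * (y k - y₀ k + 1))

theorem Real.exp_mul_sub_add_one_le_exp_s1 (a b : ℝ) : Real.exp a * (b - a + 1) ≤ Real.exp b :=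
  calc Real.exp a * (b - a + 1) ≤ Real.exp a * Real.exp (b - a) :=
        mul_le_mul_of_nonneg_left (Real.add_one_le_exp _) (Real.exp_pos a).le
    _ = Real.exp b := by rw [← Real.exp_add, add_sub_cancel]

theorem LinFeasible.relinearize {K M : ℕ} {H : Fin K → Matrix (Fin M) (Fin M) ℂ} {σ2 P : ℝ}
    {c y₀ : Fin K → ℝ} {W : Fin K → Matrix (Fin M) (Fin M) ℂ} {x y : Fin K → ℝ}
    (h : LinFeasible H σ2 P c y₀ W x y) : LinFeasible H σ2 P c y W x y := by
  obtain ⟨hW, hrate, hc, hpow, hinterf⟩ := h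
  refine ⟨hW, hrate, hc, hpow, fun k => ?_⟩
  calc σ2 + ∑ i ∈ Finset.univ.erase k, ((H k * W i).trace).re
      ≤ Real.exp (y₀ k) * (y k - y₀ k + 1) := hinterf k
    _ ≤ Real.exp (y k) := Real.exp_mul_sub_add_one_le_exp_s1 _ _
    _ = Real.exp (y k) * (y k - y k + 1) := by ring

theorem linearized_feasible_self_and_monotone_general
    {K M : ℕ}
    (H : Fin K → Matrix (Fin M) (Fin M) ℂ)
    (σ2 P : ℝ) (c : Fin K → ℝ) (y₀ : Fin K → ℝ)
    (W : Fin K → Matrix (Fin M) (Fin M) ℂ) (x y : Fin K → ℝ)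
    (hfeas : LinFeasible H σ2 P c y₀ W x y) :
    LinFeasible H σ2 P c y W x y ∧
      (BddAbove {s : ℝ | ∃ W' x' y', LinFeasible H σ2 P c y W' x' y' ∧ s = ∑ k, x' k} →
        ∑ k, x k ≤
          sSup {s : ℝ | ∃ W' x' y', LinFeasible H σ2 P c y W' x' y' ∧ s = ∑ k, x' k}) :=
  ⟨hfeas.relinearize, fun hbdd => le_csSup hbdd ⟨W, x, y, hfeas.relinearize, rfl⟩⟩

/-- Proposition 1 (monotonicity of Algorithm 1): any point `(W, x, y)` feasible for the
linearized problem `P2(y₀)` remains feasible for `P2(y)`, the linearized problem whose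
linearization point is its own slack vector `y`.  Consequently, if the set of objective
values of `P2(y)` is bounded above, then `Σ_k x_k` is at most its supremum; hence the
sequence of optimal objective values generated by iteratively replacing the linearization
point with the optimal slack is non-decreasing. -/
theorem linearized_feasible_self_and_monotone
    {K M : ℕ} (hK : 1 ≤ K) (hM : 1 ≤ M)
    (H : Fin K → Matrix (Fin M) (Fin M) ℂ) (hH : ∀ k, (H k).PosSemidef)
    (σ2 P : ℝ) (hσ2 : 0 < σ2) (hP : 0 < P) (c : Fin K → ℝ) (y₀ : Fin K → ℝ)
    (W : Fin K → Matrix (Fin M) (Fin M) ℂ) (x y : Fin K → ℝ)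
    (hfeas : LinFeasible H σ2 P c y₀ W x y) :
    LinFeasible H σ2 P c y W x y ∧
      (BddAbove {s : ℝ | ∃ W' x' y', LinFeasible H σ2 P c y W' x' y' ∧ s = ∑ k, x' k} →
        ∑ k, x k ≤
          sSup {s : ℝ | ∃ W' x' y', LinFeasible H σ2 P c y W' x' y' ∧ s = ∑ k, x' k}) :=
  linearized_feasible_self_and_monotone_general H σ2 P c y₀ W x y hfeas
end

section
/- Let y₀, y⋆ ∈ ℝ with y⋆ < y₀, and define ŷ := y⋆ − 1 + exp(y₀ − y⋆)·(y⋆ − y₀ + 1). Then ŷ < y⋆, and for every y ∈ ℝ with ŷ < y < y⋆ one has exp(y⋆)·(y − y⋆ + 1) > exp(y₀)·(y⋆ − y₀ + 1). That is, the first-order (tangent) approximation of the exponential taken at the point y⋆ exceeds, on the nonempty open interval (ŷ, y⋆), the value of the tangent approximation taken at y₀ and evaluated at y⋆. -/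
/-- Key step of Proposition 1 (Appendix A): for `y⋆ < y₀` and
`ŷ := y⋆ − 1 + exp(y₀ − y⋆)·(y⋆ − y₀ + 1)`, we have `ŷ < y⋆`, and for every
`y ∈ (ŷ, y⋆)` the tangent approximation of `exp` at `y⋆` evaluated at `y` exceeds
the tangent approximation at `y₀` evaluated at `y⋆`. -/
theorem tangent_update_strictly_improves
    (y₀ ystar : ℝ) (h : ystar < y₀)
    (yhat : ℝ) (hyhat : yhat = ystar - 1 + Real.exp (y₀ - ystar) * (ystar - y₀ + 1)) :
    yhat < ystar ∧
      ∀ y : ℝ, yhat < y → y < ystar →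
        Real.exp y₀ * (ystar - y₀ + 1) < Real.exp ystar * (y - ystar + 1) := by
  have hx : y₀ - ystar ≠ 0 := by linarith
  have key : Real.exp (y₀ - ystar) * (ystar - y₀ + 1) < 1 := by
    have h1 : (ystar - y₀) + 1 < Real.exp (ystar - y₀) := Real.add_one_lt_exp (by linarith)
    have h2 : Real.exp (y₀ - ystar) > 0 := Real.exp_pos _
    have h3 : Real.exp (y₀ - ystar) * Real.exp (ystar - y₀) = 1 := by
      rw [← Real.exp_add]; ring_nf; exact Real.exp_zero
    nlinarith
  constructor
  · rw [hyhat]; linarith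
  · intro y hy1 hy2
    have hgoal : Real.exp (y₀ - ystar) * (ystar - y₀ + 1) < y - ystar + 1 := by
      rw [hyhat] at hy1; linarith
    have hes : (0:ℝ) < Real.exp ystar := Real.exp_pos _
    have : Real.exp y₀ = Real.exp ystar * Real.exp (y₀ - ystar) := by
      rw [← Real.exp_add]; ring_nf
    rw [this]
    nlinarith
end

section
/- Fix K, M ≥ 1, channel vectors h_k ∈ ℂ^M for k ∈ {1,…,K}, and σ² > 0. For precoders w_1,…,w_K ∈ ℂ^M write z_{k,i} := Σ_{j=1}^M (h_k)_j·(w_i)_j. Suppose that for each k there are ŵ_k ∈ ℂ^M with ẑ_k := Σ_j (h_k)_j·(ŵ_k)_j, and reals u_k, û_k, η̄_k with û_k > 0 and u_k ≥ η̄_k > 0, such that Σ_{i≠k} |z_{k,i}|² + σ² ≤ (2/û_k)·Re(conj(ẑ_k)·z_{k,k}) − (u_k/û_k²)·|ẑ_k|². Then for every k, |z_{k,k}|² ≥ u_k·(Σ_{i≠k} |z_{k,i}|² + σ²); in particular the SINR of user k satisfies |z_{k,k}|²/(Σ_{i≠k} |z_{k,i}|² + σ²) ≥ u_k ≥ η̄_k,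 i.e., every feasible point of the approximated problem P3 satisfies the original QoS (SINR) constraints. -/
/-! Since `Re (conj ẑ · z) ≤ |ẑ| |z|`, the linearized constraint gives
`u D ≤ (2u/û) |ẑ| |z| - (u/û)² |ẑ|² = |z|² - (|z| - (u/û) |ẑ|)² ≤ |z|²`,
where `D` is the interference-plus-noise power; dividing by `D ≥ σ² > 0` bounds the SINR. -/

open ComplexConjugate

theorem mul_le_sq_of_le_two_div_mul_sub {D u c a b : ℝ} (hu : 0 ≤ u)
    (h : D ≤ 2 / c * (a * b) - u / c ^ 2 * a ^ 2) : u * D ≤ b ^ 2 := by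
  calc u * D ≤ u * (2 / c * (a * b) - u / c ^ 2 * a ^ 2) := mul_le_mul_of_nonneg_left h hu
    _ = b ^ 2 - (b - u / c * a) ^ 2 := by ring
    _ ≤ b ^ 2 := sub_le_self _ (sq_nonneg _)

theorem mul_le_norm_sq_of_le_two_div_mul_re_sub {D u c : ℝ} {zhat z : ℂ} (hu : 0 ≤ u)
    (hc : 0 ≤ c) (h : D ≤ 2 / c * (conj zhat * z).re - u / c ^ 2 * ‖zhat‖ ^ 2) :
    u * D ≤ ‖z‖ ^ 2 := by
  have hre : (conj zhat * z).re ≤ ‖zhat‖ * ‖z‖ :=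
    (Complex.re_le_norm _).trans_eq (by rw [norm_mul, Complex.norm_conj])
  refine mul_le_sq_of_le_two_div_mul_sub (c := c) (a := ‖zhat‖) hu (h.trans ?_)
  gcongr

theorem approx_feasible_implies_qos_general
    {K : ℕ}
    (σ2 : ℝ) (hσ2 : 0 < σ2)
    (u uhat ηbar : Fin K → ℝ)
    (huhat : ∀ k, 0 < uhat k) (hηbar : ∀ k, 0 < ηbar k) (huη : ∀ k, ηbar k ≤ u k)
    (z : Fin K → Fin K → ℂ)
    (zhat : Fin K → ℂ)
    (hcon : ∀ k, ∑ i ∈ Finset.univ.erase k, ‖z k i‖ ^ 2 + σ2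
        ≤ (2 / uhat k) * ((starRingEnd ℂ) (zhat k) * z k k).re
          - (u k / uhat k ^ 2) * ‖zhat k‖ ^ 2) :
    ∀ k, u k * (∑ i ∈ Finset.univ.erase k, ‖z k i‖ ^ 2 + σ2)
          ≤ ‖z k k‖ ^ 2 ∧
        ηbar k ≤ u k ∧
        u k ≤ ‖z k k‖ ^ 2 /
          (∑ i ∈ Finset.univ.erase k, ‖z k i‖ ^ 2 + σ2) := by
  intro k
  have hu : 0 ≤ u k := (hηbar k).le.trans (huη k)
  have hD : 0 < ∑ i ∈ Finset.univ.erase k, ‖z k i‖ ^ 2 + σ2 := by positivity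
  have hqos := mul_le_norm_sq_of_le_two_div_mul_re_sub hu (huhat k).le (hcon k)
  exact ⟨hqos, huη k, (le_div_iff₀ hD).2 hqos⟩

/-- Every feasible point of the approximated problem P3 satisfies the original QoS (SINR)
constraints: if the linearized constraint (eq:OP2 c1 app) holds for each user `k`, then
`|z_{k,k}|² ≥ u_k·(Σ_{i≠k}|z_{k,i}|² + σ²)`, and hence the SINR of user `k` is at least
`u_k ≥ η̄_k`. -/
theorem approx_feasible_implies_qos
    {K M : ℕ} (hK : 1 ≤ K) (hM : 1 ≤ M)
    (h : Fin K → Fin M → ℂ) (σ2 : ℝ) (hσ2 : 0 < σ2)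
    (w what : Fin K → Fin M → ℂ) (u uhat ηbar : Fin K → ℝ)
    (huhat : ∀ k, 0 < uhat k) (hηbar : ∀ k, 0 < ηbar k) (huη : ∀ k, ηbar k ≤ u k)
    (z : Fin K → Fin K → ℂ) (hz : ∀ k i, z k i = ∑ j, h k j * w i j)
    (zhat : Fin K → ℂ) (hzhat : ∀ k, zhat k = ∑ j, h k j * what k j)
    (hcon : ∀ k, ∑ i ∈ Finset.univ.erase k, ‖z k i‖ ^ 2 + σ2
        ≤ (2 / uhat k) * ((starRingEnd ℂ) (zhat k) * z k k).re
          - (u k / uhat k ^ 2) * ‖zhat k‖ ^ 2) :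
    ∀ k, u k * (∑ i ∈ Finset.univ.erase k, ‖z k i‖ ^ 2 + σ2)
          ≤ ‖z k k‖ ^ 2 ∧
        ηbar k ≤ u k ∧
        u k ≤ ‖z k k‖ ^ 2 /
          (∑ i ∈ Finset.univ.erase k, ‖z k i‖ ^ 2 + σ2) :=
  approx_feasible_implies_qos_general σ2 hσ2 u uhat ηbar huhat hηbar huη z zhat hcon
end
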